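/- Let x_1, …, x_n ∈ ℝ^{2n} be linearly independent vectors spanning a Lagrangian subspace L, i.e. x_iᵀ J x_j = 0 for all i, j, set X := [x_1 ⋯ x_n] ∈ ℝ^{2n×n}, let C ∈ ℝ^{n×n} be a companion matrix, let H̃ := X C X⁺ + Jᵀ (X C X⁺)ᵀ J, and let X^⊥ ∈ ℝ^{2n×n} be a matrix whose columns form an orthonormal basis of L^⊥. Then a matrix H ∈ ℝ^{2n×2n} is skew-Hamiltonian and satisfies H X = X C if and only if H = H̃ + Jᵀ X^⊥ S (X^⊥)ᵀ for some skew-symmetric matrix S ∈ ℝ^{n×n}. -/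

import Mathlib

/-!
`H̃` is itself skew-Hamiltonian with `H̃ X = X C`: the first summand gives `X C X⁺ X = X C`,
and the second vanishes on `X` because `Xᵀ J X = 0` (`L` is Lagrangian). So the question is which
`K = H - H̃` are skew-Hamiltonian with `K X = 0`. `K` is skew-Hamiltonian iff `M = J K` is
skew-symmetric, and a skew-symmetric `M` with `M X = 0` has all its columns and rows in `L^⊥`;
hence `M = X^⊥ (X^⊥ᵀ M X^⊥) X^⊥ᵀ`, with `X^⊥ᵀ M X^⊥` skew-symmetric.
-/

open Matrix

noncomputable section

/-- The canonical skew-symmetric matrix `J = [[0, I],[-I, 0]]`. -/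
def Jmat (n : ℕ) : Matrix (Fin n ⊕ Fin n) (Fin n ⊕ Fin n) ℝ :=
  Matrix.fromBlocks 0 1 (-1) 0

/-- A matrix `H` is skew-Hamiltonian if `Jᵀ Hᵀ J = H`. -/
def IsSkewHamiltonian {n : ℕ} (H : Matrix (Fin n ⊕ Fin n) (Fin n ⊕ Fin n) ℝ) : Prop :=
  (Jmat n)ᵀ * Hᵀ * Jmat n = H

/-- `X = [x_1 ⋯ x_n] ∈ ℝ^{2n×n}`. -/
def Xfull {n : ℕ} (x : Fin n → (Fin n ⊕ Fin n) → ℝ) :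
    Matrix (Fin n ⊕ Fin n) (Fin n) ℝ :=
  Matrix.of fun i j => x j i

/-- The Moore–Penrose pseudoinverse `X⁺ = (Xᵀ X)⁻¹ Xᵀ` of `X`
(for `X` with linearly independent columns). -/
def Xpinv {n : ℕ} (x : Fin n → (Fin n ⊕ Fin n) → ℝ) :
    Matrix (Fin n) (Fin n ⊕ Fin n) ℝ :=
  ((Xfull x)ᵀ * Xfull x)⁻¹ * (Xfull x)ᵀ

/-- A companion matrix: ones on the subdiagonal, last column arbitrary, zeros elsewhere;
equivalently `C e_k = e_{k+1}` for `k = 1, …, n-1`. -/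
def IsCompanion {n : ℕ} (C : Matrix (Fin n) (Fin n) ℝ) : Prop :=
  ∀ k : Fin n, k.1 + 1 < n → ∀ i : Fin n, C i k = if i.1 = k.1 + 1 then 1 else 0

/-- `H̃ = X C X⁺ + Jᵀ (X C X⁺)ᵀ J`. -/
def Htilde {n : ℕ} (x : Fin n → (Fin n ⊕ Fin n) → ℝ) (C : Matrix (Fin n) (Fin n) ℝ) :
    Matrix (Fin n ⊕ Fin n) (Fin n ⊕ Fin n) ℝ :=
  Xfull x * C * Xpinv x + (Jmat n)ᵀ * (Xfull x * C * Xpinv x)ᵀ * Jmat n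

namespace Matrix

variable {m k l R : Type*} [Fintype m] [Fintype k]

theorem isUnit_transpose_mul_self_of_linearIndependent [Field R] [LinearOrder R]
    [IsStrictOrderedRing R] [Fintype l] [DecidableEq l] {A : Matrix m l R}
    (hA : LinearIndependent R A.col) : IsUnit (Aᵀ * A) := by
  rw [← mulVec_injective_iff_isUnit]
  change Function.Injective (Aᵀ * A).mulVecLin
  rw [← LinearMap.ker_eq_bot, ker_mulVecLin_transpose_mul_self, LinearMap.ker_eq_bot]
  exact mulVec_injective_iff.2 hA

variable [CommRing R] [DecidableEq k] {X : Matrix m l R} {P : Matrix m k R}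

theorem transpose_mul_eq_zero_of_range (hrange : ∀ w, (P *ᵥ w) ᵥ* X = 0) : Pᵀ * X = 0 := by
  ext j i
  have hcol : P *ᵥ Pi.single j 1 = Pᵀ j := by ext; simp [mulVec_single]
  rw [mul_apply_eq_vecMul, ← hcol, hrange]
  rfl

theorem mul_transpose_mul_eq_self (hP : Pᵀ * P = 1)
    (hrange : ∀ v, v ᵥ* X = 0 → ∃ w, P *ᵥ w = v) {N : Matrix m m R} (hN : Nᵀ * X = 0) :
    P * (Pᵀ * N) = N := by
  choose w hw using fun j => hrange (Nᵀ j) (by rw [← mul_apply_eq_vecMul, hN]; rfl)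
  have hPW : P * (of w)ᵀ = N := by
    ext i j
    exact congrFun (hw j) i
  rw [← hPW, ← Matrix.mul_assoc Pᵀ, hP, Matrix.one_mul]

theorem skew_and_mul_eq_zero_iff (hP : Pᵀ * P = 1)
    (hrange : ∀ v, (∃ w, P *ᵥ w = v) ↔ v ᵥ* X = 0) (M : Matrix m m R) :
    (Mᵀ = -M ∧ M * X = 0) ↔ ∃ S : Matrix k k R, Sᵀ = -S ∧ M = P * S * Pᵀ := by
  constructor
  · rintro ⟨hskew, hMX⟩
    have hcols : P * (Pᵀ * M) = M :=
      mul_transpose_mul_eq_self hP (fun v => (hrange v).2)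
        (by rw [hskew, Matrix.neg_mul, hMX, neg_zero])
    have hrows : P * (Pᵀ * Mᵀ) = Mᵀ :=
      mul_transpose_mul_eq_self hP (fun v => (hrange v).2) (by rw [transpose_transpose, hMX])
    refine ⟨Pᵀ * M * P, by simp [transpose_mul, hskew, Matrix.mul_assoc], ?_⟩
    calc M = (P * (Pᵀ * Mᵀ))ᵀ := by rw [hrows, transpose_transpose]
      _ = M * P * Pᵀ := by simp [transpose_mul, Matrix.mul_assoc]
      _ = P * (Pᵀ * M * P) * Pᵀ := by
        conv_lhs => rw [← hcols]
        simp only [Matrix.mul_assoc]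
  · rintro ⟨S, hS, rfl⟩
    have hPX : Pᵀ * X = 0 := transpose_mul_eq_zero_of_range fun w => (hrange _).1 ⟨w, rfl⟩
    exact ⟨by simp [transpose_mul, hS, Matrix.mul_assoc],
      by rw [Matrix.mul_assoc, hPX, Matrix.mul_zero]⟩

end Matrix

section Symplectic

theorem Jmat_transpose (n : ℕ) : (Jmat n)ᵀ = -Jmat n := by
  simp [Jmat, fromBlocks_transpose, fromBlocks_neg]

theorem Jmat_mul_Jmat (n : ℕ) : Jmat n * Jmat n = -1 := by
  simp [Jmat, fromBlocks_multiply, ← fromBlocks_one, fromBlocks_neg]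

theorem Jmat_mul_transpose (n : ℕ) : Jmat n * (Jmat n)ᵀ = 1 := by
  rw [Jmat_transpose, Matrix.mul_neg, Jmat_mul_Jmat, neg_neg]

theorem Jmat_transpose_mul (n : ℕ) : (Jmat n)ᵀ * Jmat n = 1 := by
  rw [Jmat_transpose, Matrix.neg_mul, Jmat_mul_Jmat, neg_neg]

variable {n : ℕ}

theorem Jmat_mul_eq_zero_iff {l : Type*} {Y : Matrix (Fin n ⊕ Fin n) l ℝ} :
    Jmat n * Y = 0 ↔ Y = 0 := by
  refine ⟨fun h => ?_, fun h => by rw [h, Matrix.mul_zero]⟩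
  rw [← Matrix.one_mul Y, ← Jmat_transpose_mul, Matrix.mul_assoc, h, Matrix.mul_zero]

theorem eq_Jmat_transpose_mul_iff {K N : Matrix (Fin n ⊕ Fin n) (Fin n ⊕ Fin n) ℝ} :
    K = (Jmat n)ᵀ * N ↔ Jmat n * K = N := by
  constructor
  · rintro rfl
    rw [← Matrix.mul_assoc, Jmat_mul_transpose, Matrix.one_mul]
  · rintro rfl
    rw [← Matrix.mul_assoc, Jmat_transpose_mul, Matrix.one_mul]

theorem isSkewHamiltonian_iff_Jmat_mul_skew (K : Matrix (Fin n ⊕ Fin n) (Fin n ⊕ Fin n) ℝ) :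
    IsSkewHamiltonian K ↔ (Jmat n * K)ᵀ = -(Jmat n * K) := by
  rw [IsSkewHamiltonian, eq_comm, Matrix.mul_assoc, eq_Jmat_transpose_mul_iff, transpose_mul,
    Jmat_transpose, Matrix.mul_neg, neg_inj, eq_comm]

theorem isSkewHamiltonian_sub_iff {G : Matrix (Fin n ⊕ Fin n) (Fin n ⊕ Fin n) ℝ}
    (hG : IsSkewHamiltonian G) (H : Matrix (Fin n ⊕ Fin n) (Fin n ⊕ Fin n) ℝ) :
    IsSkewHamiltonian (H - G) ↔ IsSkewHamiltonian H := by
  rw [IsSkewHamiltonian, IsSkewHamiltonian, transpose_sub, Matrix.mul_sub, Matrix.sub_mul, hG,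
    sub_left_inj]

theorem isSkewHamiltonian_add_conj (A : Matrix (Fin n ⊕ Fin n) (Fin n ⊕ Fin n) ℝ) :
    IsSkewHamiltonian (A + (Jmat n)ᵀ * Aᵀ * Jmat n) := by
  have hconj : (Jmat n)ᵀ * ((Jmat n)ᵀ * Aᵀ * Jmat n)ᵀ * Jmat n = A := by
    rw [transpose_mul, transpose_mul, transpose_transpose, transpose_transpose, Jmat_transpose]
    simp only [Matrix.neg_mul, Matrix.mul_neg, neg_neg, Matrix.mul_assoc, Jmat_mul_Jmat,
      Matrix.mul_one]
    rw [← Matrix.mul_assoc, Jmat_mul_Jmat, Matrix.neg_mul, Matrix.one_mul, neg_neg]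
  rw [IsSkewHamiltonian, transpose_add, Matrix.mul_add, Matrix.add_mul, hconj, add_comm]

theorem isSkewHamiltonian_Htilde (x : Fin n → (Fin n ⊕ Fin n) → ℝ)
    (C : Matrix (Fin n) (Fin n) ℝ) : IsSkewHamiltonian (Htilde x C) :=
  isSkewHamiltonian_add_conj _

theorem isSkewHamiltonian_and_mul_eq_zero_iff {k l : Type*} [Fintype k] [DecidableEq k]
    {X : Matrix (Fin n ⊕ Fin n) l ℝ} {P : Matrix (Fin n ⊕ Fin n) k ℝ} (hP : Pᵀ * P = 1)
    (hrange : ∀ v, (∃ w, P *ᵥ w = v) ↔ v ᵥ* X = 0)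
    (K : Matrix (Fin n ⊕ Fin n) (Fin n ⊕ Fin n) ℝ) :
    (IsSkewHamiltonian K ∧ K * X = 0) ↔
      ∃ S : Matrix k k ℝ, Sᵀ = -S ∧ K = (Jmat n)ᵀ * (P * S * Pᵀ) := by
  rw [isSkewHamiltonian_iff_Jmat_mul_skew, ← Jmat_mul_eq_zero_iff, ← Matrix.mul_assoc,
    skew_and_mul_eq_zero_iff hP hrange]
  simp only [eq_Jmat_transpose_mul_iff]

end Symplectic

section Lagrangian

variable {n : ℕ} {x : Fin n → (Fin n ⊕ Fin n) → ℝ}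

theorem vecMul_Xfull_eq_zero_iff (v : (Fin n ⊕ Fin n) → ℝ) :
    v ᵥ* Xfull x = 0 ↔ ∀ k, v ⬝ᵥ x k = 0 :=
  funext_iff

theorem Xpinv_mul_Xfull (hLI : LinearIndependent ℝ x) : Xpinv x * Xfull x = 1 := by
  rw [Xpinv, Matrix.mul_assoc]
  exact nonsing_inv_mul _
    ((isUnit_iff_isUnit_det _).1 (isUnit_transpose_mul_self_of_linearIndependent hLI))

theorem Xfull_transpose_mul_Jmat_mul_Xfull
    (hLag : ∀ i j : Fin n, x i ⬝ᵥ (Jmat n *ᵥ x j) = 0) :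
    (Xfull x)ᵀ * (Jmat n * Xfull x) = 0 := by
  ext i j
  exact hLag i j

theorem Htilde_mul_Xfull (hLI : LinearIndependent ℝ x)
    (hLag : ∀ i j : Fin n, x i ⬝ᵥ (Jmat n *ᵥ x j) = 0) (C : Matrix (Fin n) (Fin n) ℝ) :
    Htilde x C * Xfull x = Xfull x * C := by
  simp only [Htilde, Matrix.add_mul, transpose_mul, Matrix.mul_assoc, Xpinv_mul_Xfull hLI,
    Xfull_transpose_mul_Jmat_mul_Xfull hLag, Matrix.mul_zero, Matrix.mul_one, add_zero]

end Lagrangian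

theorem skewHamiltonian_HX_eq_XC_iff_general {n : ℕ} (x : Fin n → (Fin n ⊕ Fin n) → ℝ)
    (hLI : LinearIndependent ℝ x)
    (hLag : ∀ i j : Fin n, x i ⬝ᵥ (Jmat n *ᵥ x j) = 0)
    (C : Matrix (Fin n) (Fin n) ℝ)
    (Xperp : Matrix (Fin n ⊕ Fin n) (Fin n) ℝ)
    (hON : Xperpᵀ * Xperp = 1)
    (hperp : ∀ v : (Fin n ⊕ Fin n) → ℝ,
      (∃ w : Fin n → ℝ, Xperp *ᵥ w = v) ↔ ∀ k : Fin n, v ⬝ᵥ x k = 0)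
    (H : Matrix (Fin n ⊕ Fin n) (Fin n ⊕ Fin n) ℝ) :
    (IsSkewHamiltonian H ∧ H * Xfull x = Xfull x * C) ↔
    ∃ S : Matrix (Fin n) (Fin n) ℝ, Sᵀ = -S ∧
      H = Htilde x C + (Jmat n)ᵀ * (Xperp * S * Xperpᵀ) := by
  have hrange : ∀ v, (∃ w, Xperp *ᵥ w = v) ↔ v ᵥ* Xfull x = 0 := fun v =>
    (hperp v).trans (vecMul_Xfull_eq_zero_iff v).symm
  calc (IsSkewHamiltonian H ∧ H * Xfull x = Xfull x * C)
      ↔ IsSkewHamiltonian (H - Htilde x C) ∧ (H - Htilde x C) * Xfull x = 0 := by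
        rw [isSkewHamiltonian_sub_iff (isSkewHamiltonian_Htilde x C), Matrix.sub_mul,
          Htilde_mul_Xfull hLI hLag, sub_eq_zero]
    _ ↔ ∃ S, Sᵀ = -S ∧ H - Htilde x C = (Jmat n)ᵀ * (Xperp * S * Xperpᵀ) :=
        isSkewHamiltonian_and_mul_eq_zero_iff hON hrange _
    _ ↔ _ := by simp only [sub_eq_iff_eq_add']

/-- Characterization of all skew-Hamiltonian matrices `H` with `H X = X C`:
`H` is skew-Hamiltonian with `H X = X C` iff `H = H̃ + Jᵀ X^⊥ S (X^⊥)ᵀ` for some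
skew-symmetric `S ∈ ℝ^{n×n}`, where the columns of `X^⊥` form an orthonormal basis of
`L^⊥`, `L = span{x_1,…,x_n}`. -/
theorem skewHamiltonian_HX_eq_XC_iff {n : ℕ} (x : Fin n → (Fin n ⊕ Fin n) → ℝ)
    (hLI : LinearIndependent ℝ x)
    (hLag : ∀ i j : Fin n, x i ⬝ᵥ (Jmat n *ᵥ x j) = 0)
    (C : Matrix (Fin n) (Fin n) ℝ) (hC : IsCompanion C)
    (Xperp : Matrix (Fin n ⊕ Fin n) (Fin n) ℝ)
    (hON : Xperpᵀ * Xperp = 1)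
    (hperp : ∀ v : (Fin n ⊕ Fin n) → ℝ,
      (∃ w : Fin n → ℝ, Xperp *ᵥ w = v) ↔ ∀ k : Fin n, v ⬝ᵥ x k = 0)
    (H : Matrix (Fin n ⊕ Fin n) (Fin n ⊕ Fin n) ℝ) :
    (IsSkewHamiltonian H ∧ H * Xfull x = Xfull x * C) ↔
    ∃ S : Matrix (Fin n) (Fin n) ℝ, Sᵀ = -S ∧
      H = Htilde x C + (Jmat n)ᵀ * (Xperp * S * Xperpᵀ) :=
  skewHamiltonian_HX_eq_XC_iff_general x hLI hLag C Xperp hON hperp H
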